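/- If H is an intra-regular hypersemigroup and f is a fuzzy interior ideal of H, then f is a fuzzy ideal of H. -/
import Mathlib


/-- Induced operation on subsets of a hypergroupoid: A*B = union of a∘b. -/
def sProd {H : Type*} (c : H → H → Set H) (A B : Set H) : Set H :=
  ⋃ a ∈ A, ⋃ b ∈ B, c a b

/-- Hypergroupoid: values of the hyperoperation are nonempty. -/
def IsHypergroupoid {H : Type*} (c : H → H → Set H) : Prop :=
  ∀ a b, (c a b).Nonempty

/-- Hypersemigroup law. -/
def IsHypersemigroup {H : Type*} (c : H → H → Set H) : Prop :=
  IsHypergroupoid c ∧ ∀ x y z : H, sProd c {x} (c y z) = sProd c (c x y) {z}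

/-- Fuzzy subset: map into [0,1]. -/
def IsFuzzy {H : Type*} (f : H → ℝ) : Prop := ∀ x, f x ∈ Set.Icc (0:ℝ) 1

def IsFuzzyLeftIdeal {H : Type*} (c : H → H → Set H) (f : H → ℝ) : Prop :=
  IsFuzzy f ∧ ∀ x y u : H, u ∈ c x y → f y ≤ f u

def IsFuzzyRightIdeal {H : Type*} (c : H → H → Set H) (f : H → ℝ) : Prop :=
  IsFuzzy f ∧ ∀ x y u : H, u ∈ c x y → f x ≤ f u

def IsFuzzyIdeal {H : Type*} (c : H → H → Set H) (f : H → ℝ) : Prop :=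
  IsFuzzyLeftIdeal c f ∧ IsFuzzyRightIdeal c f

def IsFuzzyInteriorIdeal {H : Type*} (c : H → H → Set H) (f : H → ℝ) : Prop :=
  IsFuzzy f ∧ ∀ x a y u : H, u ∈ sProd c (c x a) {y} → f a ≤ f u

/-- Interior ideal: nonempty A with H*A*H ⊆ A. -/
def IsInteriorIdeal {H : Type*} (c : H → H → Set H) (A : Set H) : Prop :=
  A.Nonempty ∧ sProd c (sProd c Set.univ A) Set.univ ⊆ A

def IsLeftIdeal {H : Type*} (c : H → H → Set H) (A : Set H) : Prop :=
  A.Nonempty ∧ sProd c Set.univ A ⊆ A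

def IsRightIdeal {H : Type*} (c : H → H → Set H) (A : Set H) : Prop :=
  A.Nonempty ∧ sProd c A Set.univ ⊆ A

def IsIdeal {H : Type*} (c : H → H → Set H) (A : Set H) : Prop :=
  IsLeftIdeal c A ∧ IsRightIdeal c A

def IsRegularHyp {H : Type*} (c : H → H → Set H) : Prop :=
  ∀ a : H, ∃ x : H, a ∈ sProd c {a} (c x a)

def IsIntraRegular {H : Type*} (c : H → H → Set H) : Prop :=
  ∀ a : H, ∃ x y : H, a ∈ sProd c (c x a) (c a y)

def IsSimple {H : Type*} (c : H → H → Set H) : Prop :=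
  ∀ A : Set H, IsIdeal c A → A = Set.univ

open Classical in
/-- Characteristic function of a set. -/
noncomputable def charFun {H : Type*} (A : Set H) : H → ℝ :=
  fun x => if x ∈ A then 1 else 0


lemma mem_sProd' {H : Type*} (c : H → H → Set H) (A B : Set H) (u : H) :
    u ∈ sProd c A B ↔ ∃ a ∈ A, ∃ b ∈ B, u ∈ c a b := by
  simp [sProd]

theorem stmt13 {H : Type*} [Nonempty H] (c : H → H → Set H)
    (hc : IsHypersemigroup c) (hr : IsIntraRegular c) (f : H → ℝ)
    (hf : IsFuzzyInteriorIdeal c f) : IsFuzzyIdeal c f := by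
  obtain ⟨hfz, hint⟩ := hf
  obtain ⟨_, hassoc⟩ := hc
  constructor
  · refine ⟨hfz, fun x y u hu => ?_⟩
    obtain ⟨p, q, hy⟩ := hr y
    rw [mem_sProd'] at hy
    obtain ⟨s, hs, t, ht, hyst⟩ := hy
    -- u ∈ c x y, y ∈ c s t ⟹ u ∈ sProd {x} (c s t) = sProd (c x s) {t}
    have h1 : u ∈ sProd c (c x s) {t} := by
      rw [← hassoc, mem_sProd']
      exact ⟨x, rfl, y, hyst, hu⟩
    rw [mem_sProd'] at h1
    obtain ⟨v, hv, t', ht', huvt⟩ := h1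
    rw [Set.mem_singleton_iff] at ht'; rw [ht'] at huvt
    -- u ∈ c v t, t ∈ c y q ⟹ u ∈ sProd {v} (c y q) = sProd (c v y) {q}
    have h2 : u ∈ sProd c (c v y) {q} := by
      rw [← hassoc, mem_sProd']
      exact ⟨v, rfl, t, ht, huvt⟩
    exact hint v y q u h2
  · refine ⟨hfz, fun x y u hu => ?_⟩
    obtain ⟨p, q, hx⟩ := hr x
    rw [mem_sProd'] at hx
    obtain ⟨s, hs, t, ht, hxst⟩ := hx
    -- u ∈ c x y, x ∈ c s t ⟹ u ∈ sProd (c s t) {y} = sProd {s} (c t y)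
    have h1 : u ∈ sProd c {s} (c t y) := by
      rw [hassoc, mem_sProd']
      exact ⟨x, hxst, y, rfl, hu⟩
    rw [mem_sProd'] at h1
    obtain ⟨s', hs', w, hw, husw⟩ := h1
    rw [Set.mem_singleton_iff] at hs'; rw [hs'] at husw
    -- u ∈ c s w, s ∈ c p x ⟹ u ∈ sProd (c p x) {w}
    have h2 : u ∈ sProd c (c p x) {w} := by
      rw [mem_sProd']
      exact ⟨s, hs, w, rfl, husw⟩
    exact hint p x w u h2
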